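/- Let f : W → Y, g : W → X, h : Y → Z and j : X → Z be functors between categories with a natural isomorphism j ∘ g ≅ h ∘ f, and let k : Y → T be a further functor. Then the square with horizontal functors f : W → Y and j : X → Z and vertical functors g : W → X and h : Y → Z is 2-Cartesian if and only if the square with horizontal functors f : W → Y and j × id_T : X × T → Z × T and vertical functors (g, k ∘ f) : W → X × T and (h, k) : Y → Z × T is 2-Cartesian. -/

import Mathlib

open CategoryTheory

universe v₁ v₂ v₃ v₄ v₅ v₆ u₁ u₂ u₃ u₄ u₅ u₆

section IsoFibre

variable {X : Type u₁} {Y : Type u₂} {Z : Type u₃}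
  [Category.{v₁} X] [Category.{v₂} Y] [Category.{v₃} Z]

/-- The iso-fibre product of two functors `F : 𝒳 ⥤ 𝒵` and `G : 𝒴 ⥤ 𝒵`: the category of
triples `(x, y, θ)` with `θ : F(x) ≅ G(y)` an isomorphism, morphisms
`(x, y, θ) → (x', y', θ')` being pairs `(α : x ⟶ x', β : y ⟶ y')` with
`θ' ∘ F(α) = G(β) ∘ θ`. -/
def IsoFibreProd (F : X ⥤ Z) (G : Y ⥤ Z) :=
  ObjectProperty.FullSubcategory fun c : Comma F G => IsIso c.hom

instance (F : X ⥤ Z) (G : Y ⥤ Z) : Category (IsoFibreProd F G) :=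
  ObjectProperty.FullSubcategory.category _

/-- The comparison functor from the corner of a 2-commutative square to the iso-fibre
product of the other two sides. -/
def comparison {W : Type u₄} [Category.{v₄} W]
    (p : W ⥤ X) (q : W ⥤ Y) (F : X ⥤ Z) (G : Y ⥤ Z) (α : p ⋙ F ≅ q ⋙ G) :
    W ⥤ IsoFibreProd F G where
  obj w := ⟨⟨p.obj w, q.obj w, α.hom.app w⟩, inferInstance⟩
  map {w w'} m := ObjectProperty.homMk ⟨p.map m, q.map m, α.hom.naturality m⟩

/-- A 2-commutative square of categories is 2-Cartesian if the comparison functor into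
the iso-fibre product is an equivalence of categories. -/
def Is2Cartesian {W : Type u₄} [Category.{v₄} W]
    (p : W ⥤ X) (q : W ⥤ Y) (F : X ⥤ Z) (G : Y ⥤ Z) (α : p ⋙ F ≅ q ⋙ G) : Prop :=
  (comparison p q F G α).IsEquivalence

end IsoFibre

/-!
An object of `(𝒳 × 𝒯) ×_{𝒵 × 𝒯} 𝒴` is an object `(x, y, θ)` of `𝒳 ×_𝒵 𝒴` together with an
object `t` of `𝒯` and an isomorphism `t ≅ k(y)`; this extra datum is unique up to unique
isomorphism, so `(x, y, θ) ↦ ((x, k y), y, (θ, 𝟙))` is an equivalence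
`𝒳 ×_𝒵 𝒴 ≌ (𝒳 × 𝒯) ×_{𝒵 × 𝒯} 𝒴`. The comparison functor of the second square is the
comparison functor of the first followed by this equivalence.
-/

lemma CategoryTheory.Functor.isEquivalence_iff_comp_right {C D E : Type*} [Category* C]
    [Category* D] [Category* E] (F : C ⥤ D) (G : D ⥤ E) [G.IsEquivalence] :
    F.IsEquivalence ↔ (F ⋙ G).IsEquivalence :=
  ⟨fun _ => inferInstance, fun _ => F.isEquivalence_of_comp_right G⟩

namespace IsoFibreProd

variable {X : Type u₂} {Y : Type u₃} {Z : Type u₄} {T : Type u₅}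
  [Category.{v₂} X] [Category.{v₃} Y] [Category.{v₄} Z] [Category.{v₅} T]

lemma hom_ext {F : X ⥤ Z} {G : Y ⥤ Z} {c c' : IsoFibreProd F G} {m m' : c ⟶ c'}
    (hl : m.hom.left = m'.hom.left) (hr : m.hom.right = m'.hom.right) : m = m' :=
  ObjectProperty.hom_ext _ (CommaMorphism.ext hl hr)

variable (j : X ⥤ Z) (h : Y ⥤ Z) (k : Y ⥤ T)

def prodFunctor : IsoFibreProd j h ⥤ IsoFibreProd (j.prod (𝟭 T)) (h.prod' k) where
  obj c := ⟨⟨⟨c.obj.left, k.obj c.obj.right⟩, c.obj.right, ⟨c.obj.hom, 𝟙 _⟩⟩,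
    (isIso_prod_iff _ _).mpr ⟨c.property, inferInstanceAs (IsIso (𝟙 _))⟩⟩
  map m := ObjectProperty.homMk ⟨⟨m.hom.left, k.map m.hom.right⟩, m.hom.right,
    Prod.ext (by simp [m.hom.w]) (by simp)⟩
  map_id _ := hom_ext (Prod.ext rfl (k.map_id _)) rfl
  map_comp _ _ := hom_ext (Prod.ext rfl (k.map_comp _ _)) rfl

instance : (prodFunctor j h k).Faithful where
  map_injective e := hom_ext (congrArg (fun m => m.hom.left.1) e) (congrArg (·.hom.right) e)

instance : (prodFunctor j h k).Full where
  map_surjective u := by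
    have hk : k.map u.hom.right = u.hom.left.2 := by
      simpa [prodFunctor] using (congrArg Prod.snd u.hom.w).symm
    exact ⟨ObjectProperty.homMk ⟨u.hom.left.1, u.hom.right, congrArg Prod.fst u.hom.w⟩,
      hom_ext (Prod.ext rfl hk) rfl⟩

instance : (prodFunctor j h k).EssSurj where
  mem_essImage c := by
    obtain ⟨hθ, hφ⟩ := (isIso_prod_iff _ _).mp c.property
    exact ⟨⟨⟨c.obj.left.1, c.obj.right, c.obj.hom.1⟩, hθ⟩, ⟨ObjectProperty.isoMk _ <|
      Comma.isoMk ((Iso.refl _).prod (asIso c.obj.hom.2).symm) (Iso.refl _)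
        (Prod.ext (by simp [prodFunctor]) (by simp [prodFunctor]))⟩⟩

instance : (prodFunctor j h k).IsEquivalence where

end IsoFibreProd

/-- **Statement 13.** Let `f : W ⥤ Y`, `g : W ⥤ X`, `h : Y ⥤ Z`, `j : X ⥤ Z` be functors
with a natural isomorphism `α : j ∘ g ≅ h ∘ f`, and let `k : Y ⥤ T` be a further functor.
Then the square `(g, f, j, h)` is 2-Cartesian if and only if the square
`((g, k ∘ f), f, j × id_T, (h, k))` is 2-Cartesian. -/
theorem stmt_13
    {W : Type u₁} {X : Type u₂} {Y : Type u₃} {Z : Type u₄} {T : Type u₅}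
    [Category.{v₁} W] [Category.{v₂} X] [Category.{v₃} Y]
    [Category.{v₄} Z] [Category.{v₅} T]
    (f : W ⥤ Y) (g : W ⥤ X) (h : Y ⥤ Z) (j : X ⥤ Z) (k : Y ⥤ T)
    (α : g ⋙ j ≅ f ⋙ h) :
    Is2Cartesian g f j h α ↔
      Is2Cartesian (g.prod' (f ⋙ k)) f (j.prod (𝟭 T)) (h.prod' k)
        (NatIso.ofComponents
          (fun w => Iso.prod (α.app w) (Iso.refl ((f ⋙ k).obj w)))
          (fun {w w'} m => by
            apply Prod.ext
            · simpa using α.hom.naturality m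
            · simp)) :=
  (comparison g f j h α).isEquivalence_iff_comp_right (IsoFibreProd.prodFunctor j h k)
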